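/- arXiv:2308.02274 — 7 statements merged into one kernel-verified Lean document; each statement's English description precedes it below -/
import Mathlib

section
/- For any hierarchical network D on a finite node set N, the strong successor representation σ_D is the dual game of the successor representation s_D: for every coalition H ⊆ N, σ_D(H) = s_D(N) − s_D(N \ H). -/
open Finset

variable {V : Type*} [Fintype V] [DecidableEq V]

/-- Set of predecessors of node `j` in network `D`. -/
def predSet (D : V → Finset V) (j : V) : Finset V :=
  Finset.univ.filter (fun i => j ∈ D i)

/-- Number of predecessors of `j`. -/
def pD (D : V → Finset V) (j : V) : ℕ := (predSet D j).card

/-- Nodes with exactly one predecessor. -/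
def NaD (D : V → Finset V) : Finset V := Finset.univ.filter (fun j => pD D j = 1)

/-- Nodes with at least two predecessors. -/
def NbD (D : V → Finset V) : Finset V := Finset.univ.filter (fun j => 2 ≤ pD D j)

/-- Nodes with at least one predecessor. -/
def ND (D : V → Finset V) : Finset V := Finset.univ.filter (fun j => 1 ≤ pD D j)

/-- Successors of a coalition `H`. -/
def succOf (D : V → Finset V) (H : Finset V) : Finset V := H.biUnion D

/-- Successor representation (successor game). -/
def sD (D : V → Finset V) (H : Finset V) : ℕ := (succOf D H).card

/-- Strong successor representation (conservative successor game). -/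
def sigmaD (D : V → Finset V) (H : Finset V) : ℕ :=
  (Finset.univ.filter (fun j => (predSet D j).Nonempty ∧ predSet D j ⊆ H)).card

/-- Number of successors of `i` having a unique predecessor. -/
def saD (D : V → Finset V) (i : V) : ℕ := (D i ∩ NaD D).card

/-- Number of successors of `i` having multiple predecessors. -/
def sbD (D : V → Finset V) (i : V) : ℕ := (D i ∩ NbD D).card

/-- The strong successor representation is the dual game of the successor representation. -/
theorem sigma_dual_of_s (D : V → Finset V) (hD : ∀ i, i ∉ D i) (H : Finset V) :
    (sigmaD D H : ℤ) = (sD D Finset.univ : ℤ) - (sD D (Finset.univ \ H) : ℤ) := by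
  have h1 : succOf D Finset.univ = Finset.univ.filter (fun j => (predSet D j).Nonempty) := by
    ext j
    simp [succOf, predSet, Finset.Nonempty, Finset.mem_filter]
  have h2 : succOf D (Finset.univ \ H) =
      Finset.univ.filter (fun j => (predSet D j).Nonempty ∧ ¬ predSet D j ⊆ H) := by
    ext j
    simp only [succOf, Finset.mem_biUnion, Finset.mem_sdiff, Finset.mem_filter,
      Finset.mem_univ, true_and, Finset.Nonempty, Finset.subset_iff, predSet, not_forall]
    constructor
    · rintro ⟨i, hiH, hji⟩
      exact ⟨⟨i, by simp [hji]⟩, ⟨i, by simp [hji], hiH⟩⟩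
    · rintro ⟨_, i, hi, hiH⟩
      exact ⟨i, hiH, hi⟩
  have key : sD D Finset.univ = sigmaD D H + sD D (Finset.univ \ H) := by
    rw [sD, sD, sigmaD, h1, h2]
    rw [← Finset.filter_filter, ← Finset.filter_filter,
      ← Finset.card_union_of_disjoint, Finset.filter_union_filter_not_eq]
    exact Finset.disjoint_filter_filter_not _ _ _
  omega
end

section
/- For any hierarchical network D, the strong successor representation σ_D is a convex TU-game: σ_D(H) + σ_D(K) ≤ σ_D(H ∪ K) + σ_D(H ∩ K) for all coalitions H, K ⊆ N. -/
open Finset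

variable {V : Type*} [Fintype V] [DecidableEq V]

/-- The strong successor representation is a convex TU-game. -/
theorem sigma_convex (D : V → Finset V) (hD : ∀ i, i ∉ D i) (H K : Finset V) :
    sigmaD D H + sigmaD D K ≤ sigmaD D (H ∪ K) + sigmaD D (H ∩ K) := by
  unfold sigmaD
  set A := fun (S : Finset V) =>
    Finset.univ.filter (fun j => (predSet D j).Nonempty ∧ predSet D j ⊆ S) with hA
  have key : (A H).card + (A K).card = (A H ∪ A K).card + (A H ∩ A K).card :=
    (Finset.card_union_add_card_inter _ _).symm
  calc (A H).card + (A K).card = (A H ∪ A K).card + (A H ∩ A K).card := key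
    _ ≤ (A (H ∪ K)).card + (A (H ∩ K)).card := by
        apply Nat.add_le_add <;> apply Finset.card_le_card
        · intro j hj
          rcases Finset.mem_union.mp hj with h | h <;>
            simp only [hA, Finset.mem_filter] at h ⊢ <;>
            exact ⟨h.1, ⟨h.2.1, h.2.2.trans (by simp [Finset.subset_union_left,
              Finset.subset_union_right])⟩⟩
        · intro j hj
          rcases Finset.mem_inter.mp hj with ⟨h1, h2⟩
          simp only [hA, Finset.mem_filter] at h1 h2 ⊢
          exact ⟨h1.1, h1.2.1, Finset.subset_inter h1.2.2 h2.2.2⟩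
end

section
/- For any hierarchical network D and any node i ∈ N, the marginal contribution of i in the successor representation equals s^a_D(i): s_D(N) − s_D(N \ {i}) = s^a_D(i). -/
open Finset

variable {V : Type*} [Fintype V] [DecidableEq V]

/-- Marginal contribution of a node in the successor representation equals $s^a_D(i)$. -/
theorem marginal_s (D : V → Finset V) (hD : ∀ i, i ∉ D i) (i : V) :
    (sD D Finset.univ : ℤ) - (sD D (Finset.univ \ {i}) : ℤ) = (saD D i : ℤ) := by
  have hkey : succOf D (Finset.univ \ {i}) = succOf D Finset.univ \ (D i ∩ NaD D) := by
    ext j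
    simp only [succOf, Finset.mem_biUnion, Finset.mem_sdiff, Finset.mem_univ, true_and,
      Finset.mem_singleton, Finset.mem_inter, NaD, Finset.mem_filter, pD, not_and]
    constructor
    · rintro ⟨k, hki, hjk⟩
      refine ⟨⟨k, hjk⟩, fun hji hcard => ?_⟩
      have h2 : ({i, k} : Finset V) ⊆ predSet D j := by
        intro x hx
        simp only [Finset.mem_insert, Finset.mem_singleton] at hx
        rcases hx with rfl | rfl <;> simp [predSet, hji, hjk]
      have := Finset.card_le_card h2
      rw [Finset.card_pair (Ne.symm hki), (Finset.mem_filter.mp hcard).2] at this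
      omega
    · rintro ⟨⟨k, hjk⟩, hni⟩
      by_cases hki : k = i
      · subst hki
        have hne : ¬ predSet D j ⊆ {k} := by
          intro hsub
          have : predSet D j = {k} := Finset.Subset.antisymm hsub (by
            intro x hx
            simp only [Finset.mem_singleton] at hx
            subst hx; simp [predSet, hjk])
          exact hni hjk (Finset.mem_filter.mpr ⟨Finset.mem_univ _, by rw [this]; simp⟩)
        rw [Finset.not_subset] at hne
        obtain ⟨k', hk', hk'i⟩ := hne
        simp only [Finset.mem_singleton] at hk'i
        simp only [predSet, Finset.mem_filter] at hk'
        exact ⟨k', hk'i, hk'.2⟩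
      · exact ⟨k, hki, hjk⟩
  have hsub : D i ∩ NaD D ⊆ succOf D Finset.univ := by
    intro j hj
    simp only [Finset.mem_inter] at hj
    simp only [succOf, Finset.mem_biUnion]
    exact ⟨i, Finset.mem_univ i, hj.1⟩
  have : sD D (Finset.univ \ {i}) = sD D Finset.univ - saD D i := by
    rw [sD, sD, saD, hkey, Finset.card_sdiff_of_subset hsub]
  have hle : saD D i ≤ sD D Finset.univ := by
    rw [sD, saD]; exact Finset.card_le_card hsub
  omega
end

section
/- If D is a simple hierarchical network (every node has at most one predecessor), then the vector δ^D with δ^D_i = #D(i) is the unique Core power gauge for D, i.e., the unique δ ∈ ℝ^N_+ with Σ_i δ_i = n_D and Σ_{j∈H} δ_j ≥ σ_D(H) for all H ⊆ N. -/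
open Finset

variable {V : Type*} [Fintype V] [DecidableEq V]

lemma sigma_eq_sum (D : V → Finset V) (hsimple : ∀ j, pD D j ≤ 1) (H : Finset V) :
    sigmaD D H = ∑ i ∈ H, (D i).card := by
  have hset : Finset.univ.filter (fun j => (predSet D j).Nonempty ∧ predSet D j ⊆ H)
      = H.biUnion D := by
    ext j
    simp only [mem_filter, mem_univ, true_and, mem_biUnion]
    constructor
    · rintro ⟨⟨i, hi⟩, hsub⟩
      exact ⟨i, hsub hi, by simpa [predSet] using hi⟩
    · rintro ⟨i, hiH, hji⟩
      have hi : i ∈ predSet D j := by simp [predSet, hji]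
      refine ⟨⟨i, hi⟩, fun k hk => ?_⟩
      have := Finset.card_le_one.mp (hsimple j) k hk i hi
      subst this; exact hiH
  have hdisj : ∀ i ∈ H, ∀ i' ∈ H, i ≠ i' → Disjoint (D i) (D i') := by
    intro i _ i' _ hne
    rw [Finset.disjoint_left]
    intro j hj hj'
    have hi : i ∈ predSet D j := by simp [predSet, hj]
    have hi' : i' ∈ predSet D j := by simp [predSet, hj']
    exact hne (Finset.card_le_one.mp (hsimple j) i hi i' hi')
  rw [sigmaD, hset, Finset.card_biUnion hdisj]

lemma sigma_univ (D : V → Finset V) : sigmaD D (univ : Finset V) = (ND D).card := by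
  unfold sigmaD ND pD
  congr 1
  ext j
  simp [Finset.card_pos, Nat.one_le_iff_ne_zero, Finset.card_eq_zero,
    Finset.nonempty_iff_ne_empty]

/-- For a simple hierarchical network, the outdegree vector is the unique Core power gauge. -/
theorem simple_unique_core_gauge (D : V → Finset V) (hD : ∀ i, i ∉ D i)
    (hsimple : ∀ j, pD D j ≤ 1) :
    ((∀ i : V, (0 : ℝ) ≤ ((D i).card : ℝ)) ∧
      (∑ i : V, ((D i).card : ℝ)) = ((ND D).card : ℝ) ∧
      (∀ H : Finset V, (sigmaD D H : ℝ) ≤ ∑ i ∈ H, ((D i).card : ℝ))) ∧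
    (∀ δ : V → ℝ, (∀ i, 0 ≤ δ i) → (∑ i : V, δ i) = ((ND D).card : ℝ) →
      (∀ H : Finset V, (sigmaD D H : ℝ) ≤ ∑ i ∈ H, δ i) →
      δ = fun i => ((D i).card : ℝ)) := by
  have hsum : ∑ i : V, ((D i).card : ℝ) = ((ND D).card : ℝ) := by
    rw [← sigma_univ D, sigma_eq_sum D hsimple]
    push_cast
    rfl
  refine ⟨⟨fun i => by positivity, hsum, fun H => ?_⟩, ?_⟩
  · rw [sigma_eq_sum D hsimple]
    push_cast
    rfl
  · intro δ _ hδsum hcore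
    have hle : ∀ i : V, ((D i).card : ℝ) ≤ δ i := by
      intro i
      have := hcore {i}
      rwa [sigma_eq_sum D hsimple, Finset.sum_singleton, Finset.sum_singleton,
        Nat.cast_inj.mpr rfl] at this
    have hsums : ∑ i : V, ((D i).card : ℝ) = ∑ i : V, δ i := by rw [hsum, hδsum]
    funext i
    exact ((Finset.sum_eq_sum_iff_of_le (fun i _ => hle i)).mp hsums i (mem_univ i)).symm
end

section
/- For any hierarchical network D, the β-measure is a Core power gauge: β(D) ∈ C(D), where β_i(D) = Σ_{j ∈ D(i)} 1/p_D(j). -/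
open Finset

variable {V : Type*} [Fintype V] [DecidableEq V]

/-- The β-measure of a hierarchical network. -/
noncomputable def betaM (D : V → Finset V) (i : V) : ℝ := ∑ j ∈ D i, (1 : ℝ) / (pD D j : ℝ)

/-- The β-measure is a Core power gauge. -/
theorem beta_core_gauge (D : V → Finset V) (hD : ∀ i, i ∉ D i) :
    (∀ i : V, 0 ≤ betaM D i) ∧
    (∑ i : V, betaM D i) = ((ND D).card : ℝ) ∧
    (∀ H : Finset V, (sigmaD D H : ℝ) ≤ ∑ i ∈ H, betaM D i) := by
  have key : ∀ S : Finset V,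
      ∑ i ∈ S, betaM D i = ∑ j : V, ((S.filter (fun i => j ∈ D i)).card : ℝ) / (pD D j : ℝ) := by
    intro S
    unfold betaM
    have h1 : ∀ i : V, ∑ j ∈ D i, (1 : ℝ) / (pD D j : ℝ)
        = ∑ j : V, if j ∈ D i then (1 : ℝ) / (pD D j : ℝ) else 0 := by
      intro i
      rw [← Finset.sum_filter]
      congr 1
      ext j; simp
    simp_rw [h1]
    rw [Finset.sum_comm]
    congr 1
    ext j
    rw [Finset.sum_ite, Finset.sum_const_zero, add_zero, Finset.sum_const, nsmul_eq_mul]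
    ring
  constructor
  · intro i
    apply Finset.sum_nonneg
    intro j _
    positivity
  constructor
  · rw [key Finset.univ]
    have : ∀ j : V, ((Finset.univ.filter (fun i => j ∈ D i)).card : ℝ) / (pD D j : ℝ)
        = if 1 ≤ pD D j then 1 else 0 := by
      intro j
      have : (Finset.univ.filter (fun i => j ∈ D i)).card = pD D j := rfl
      rw [this]
      by_cases h : 1 ≤ pD D j
      · rw [if_pos h, div_self]
        exact_mod_cast (Nat.pos_of_ne_zero (by omega)).ne'
      · rw [if_neg h]
        have : pD D j = 0 := by omega
        simp [this]
    simp_rw [this]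
    rw [Finset.sum_ite, Finset.sum_const_zero, add_zero, Finset.sum_const, nsmul_eq_mul, mul_one]
    simp [ND]
  · intro H
    rw [key H]
    have hσ : (sigmaD D H : ℝ)
        = ∑ j ∈ Finset.univ.filter (fun j => (predSet D j).Nonempty ∧ predSet D j ⊆ H),
            (1 : ℝ) := by
      rw [Finset.sum_const, nsmul_eq_mul, mul_one]; rfl
    rw [hσ]
    apply le_trans (Finset.sum_le_sum ?_)
      (Finset.sum_le_sum_of_subset_of_nonneg (Finset.subset_univ _) ?_)
    · intro j hj
      simp only [Finset.mem_filter] at hj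
      obtain ⟨-, hne, hsub⟩ := hj
      have heq : H.filter (fun i => j ∈ D i) = predSet D j := by
        ext i
        simp only [Finset.mem_filter, predSet, Finset.mem_univ, true_and]
        constructor
        · rintro ⟨-, h⟩; exact h
        · intro h; exact ⟨hsub (by simp [predSet, h]), h⟩
      rw [heq]
      have hpos : 0 < pD D j := Finset.card_pos.mpr hne
      rw [show ((predSet D j).card : ℝ) = (pD D j : ℝ) from rfl, div_self
        (by exact_mod_cast hpos.ne')]
    · intro j _ _
      positivity
end

section
/- For any hierarchical network D with N^b_D ≠ ∅, the Gately value of the successor representation s_D (computed as a cost game, i.e., g_i(s_D) = s_D({i}) − [(s_D({i}) − M_i(s_D)) / Σ_j (s_D({j}) − M_j(s_D))]·[Σ_j s_D({j}) − s_D(N)]) coincides with the Gately value of the strong successor representation σ_D. -/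
open Finset

variable {V : Type*} [Fintype V] [DecidableEq V]

lemma mem_predSet {D : V → Finset V} {i j : V} : i ∈ predSet D j ↔ j ∈ D i := by
  simp [predSet]

lemma mem_ND {D : V → Finset V} {j : V} : j ∈ ND D ↔ (predSet D j).Nonempty := by
  simp [ND, pD, Nat.one_le_iff_ne_zero, Finset.card_ne_zero, Finset.nonempty_iff_ne_empty]

lemma Di_eq_union (D : V → Finset V) (i : V) :
    D i = (D i ∩ NaD D) ∪ (D i ∩ NbD D) := by
  ext j
  simp only [Finset.mem_union, Finset.mem_inter, NaD, NbD, Finset.mem_filter, Finset.mem_univ,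
    true_and]
  constructor
  · intro hj
    have h1 : 1 ≤ pD D j := Finset.card_pos.2 ⟨i, mem_predSet.2 hj⟩
    by_cases h : pD D j = 1
    · exact Or.inl ⟨hj, h⟩
    · exact Or.inr ⟨hj, by omega⟩
  · rintro (⟨h, _⟩ | ⟨h, _⟩) <;> exact h

lemma disj_ab (D : V → Finset V) (i : V) :
    Disjoint (D i ∩ NaD D) (D i ∩ NbD D) := by
  rw [Finset.disjoint_left]
  intro j h1 h2
  simp only [Finset.mem_inter, NaD, NbD, Finset.mem_filter] at h1 h2
  omega

lemma card_Di (D : V → Finset V) (i : V) : (D i).card = saD D i + sbD D i := by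
  rw [saD, sbD, ← Finset.card_union_of_disjoint (disj_ab D i), ← Di_eq_union]

lemma sD_singleton (D : V → Finset V) (i : V) : sD D {i} = saD D i + sbD D i := by
  rw [sD, succOf, Finset.singleton_biUnion, card_Di]

lemma succOf_univ (D : V → Finset V) : succOf D Finset.univ = ND D := by
  ext j
  simp [succOf, mem_ND, Finset.Nonempty, mem_predSet]

lemma sD_univ (D : V → Finset V) : sD D Finset.univ = (ND D).card := by
  rw [sD, succOf_univ]

lemma mem_Di_NaD {D : V → Finset V} {i j : V} :
    j ∈ D i ∩ NaD D ↔ predSet D j = {i} := by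
  simp only [Finset.mem_inter, NaD, Finset.mem_filter, Finset.mem_univ, true_and]
  simp only [pD]
  constructor
  · rintro ⟨hij, hc⟩
    have hi : i ∈ predSet D j := mem_predSet.2 hij
    obtain ⟨a, ha⟩ := Finset.card_eq_one.1 hc
    rw [ha] at hi ⊢
    simp only [Finset.mem_singleton] at hi
    rw [hi]
  · intro h
    refine ⟨mem_predSet.1 (h ▸ Finset.mem_singleton_self i), by rw [h]; simp⟩

lemma Di_NaD_subset_ND (D : V → Finset V) (i : V) : D i ∩ NaD D ⊆ ND D := by
  intro j hj
  rw [mem_Di_NaD] at hj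
  exact mem_ND.2 ⟨i, hj ▸ Finset.mem_singleton_self i⟩

lemma succOf_compl (D : V → Finset V) (i : V) :
    succOf D (Finset.univ \ {i}) = ND D \ (D i ∩ NaD D) := by
  ext j
  simp only [succOf, Finset.mem_biUnion, Finset.mem_sdiff, Finset.mem_univ, true_and,
    Finset.mem_singleton, mem_ND, mem_Di_NaD]
  constructor
  · rintro ⟨k, hk, hjk⟩
    refine ⟨⟨k, mem_predSet.2 hjk⟩, fun h => hk ?_⟩
    have : k ∈ predSet D j := mem_predSet.2 hjk
    rw [h, Finset.mem_singleton] at this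
    exact this
  · rintro ⟨⟨k, hk⟩, hne⟩
    by_cases hki : k = i
    · subst hki
      have hex : ∃ m ∈ predSet D j, m ≠ k := by
        by_contra hc
        push_neg at hc
        exact hne (Finset.eq_singleton_iff_unique_mem.2 ⟨hk, hc⟩)
      obtain ⟨m, hm, hmk⟩ := hex
      exact ⟨m, hmk, mem_predSet.1 hm⟩
    · exact ⟨k, hki, mem_predSet.1 hk⟩

lemma sD_compl (D : V → Finset V) (i : V) :
    sD D (Finset.univ \ {i}) + saD D i = (ND D).card := by
  rw [sD, succOf_compl, saD, Finset.card_sdiff_add_card_eq_card (Di_NaD_subset_ND D i)]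

lemma sigmaD_singleton (D : V → Finset V) (i : V) : sigmaD D {i} = saD D i := by
  rw [sigmaD, saD]
  congr 1
  ext j
  simp only [Finset.mem_filter, Finset.mem_univ, true_and, mem_Di_NaD]
  constructor
  · rintro ⟨h1, h2⟩
    obtain ⟨k, hk⟩ := h1
    have := h2 hk
    rw [Finset.mem_singleton] at this
    subst this
    exact Finset.eq_singleton_iff_unique_mem.2 ⟨hk, fun m hm => by
      have := h2 hm; rwa [Finset.mem_singleton] at this⟩
  · intro h
    rw [h]
    exact ⟨Finset.singleton_nonempty i, le_refl _⟩

lemma sigmaD_univ (D : V → Finset V) : sigmaD D Finset.univ = (ND D).card := by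
  rw [sigmaD, ND]
  congr 1
  ext j
  simp [mem_ND, pD, Nat.one_le_iff_ne_zero, Finset.card_ne_zero, Finset.nonempty_iff_ne_empty]

lemma Di_subset_ND (D : V → Finset V) (i : V) : D i ⊆ ND D :=
  fun j hj => mem_ND.2 ⟨i, mem_predSet.2 hj⟩

lemma sigmaD_compl (D : V → Finset V) (i : V) :
    sigmaD D (Finset.univ \ {i}) + (D i).card = (ND D).card := by
  have : (Finset.univ.filter (fun j => (predSet D j).Nonempty ∧
      predSet D j ⊆ Finset.univ \ {i})) = ND D \ D i := by
    ext j
    simp only [Finset.mem_filter, Finset.mem_univ, true_and, Finset.mem_sdiff, mem_ND]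
    constructor
    · rintro ⟨h1, h2⟩
      refine ⟨h1, fun hj => ?_⟩
      have hsub := h2 (mem_predSet.2 hj)
      rw [Finset.mem_sdiff, Finset.mem_singleton] at hsub
      exact hsub.2 rfl
    · rintro ⟨h1, h2⟩
      refine ⟨h1, fun k hk => ?_⟩
      rw [Finset.mem_sdiff, Finset.mem_singleton]
      exact ⟨Finset.mem_univ k, fun hki => h2 (mem_predSet.1 (hki ▸ hk))⟩
  rw [sigmaD, this, Finset.card_sdiff_add_card_eq_card (Di_subset_ND D i)]

lemma card_ND (D : V → Finset V) : (ND D).card = (NaD D).card + (NbD D).card := by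
  rw [← Finset.card_union_of_disjoint]
  · congr 1
    ext j
    simp only [ND, NaD, NbD, Finset.mem_union, Finset.mem_filter, Finset.mem_univ, true_and]
    omega
  · rw [Finset.disjoint_left]
    intro j h1 h2
    simp only [NaD, NbD, Finset.mem_filter] at h1 h2
    omega

lemma double_count (D : V → Finset V) (A : Finset V) :
    ∑ i : V, (D i ∩ A).card = ∑ k ∈ A, pD D k := by
  have h : ∀ i, (D i ∩ A).card = ∑ k ∈ A, if k ∈ D i then 1 else 0 := by
    intro i
    rw [Finset.inter_comm, ← Finset.filter_mem_eq_inter, Finset.card_filter]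
  simp_rw [h]
  rw [Finset.sum_comm]
  congr 1
  ext k
  rw [pD, predSet, Finset.card_filter]

lemma sum_saD (D : V → Finset V) : ∑ j : V, saD D j = (NaD D).card := by
  simp_rw [saD]
  rw [double_count]
  rw [Finset.card_eq_sum_ones]
  apply Finset.sum_congr rfl
  intro k hk
  simp only [NaD, Finset.mem_filter] at hk
  exact hk.2

lemma sum_sbD_pos (D : V → Finset V) (hb : (NbD D).Nonempty) : 0 < ∑ j : V, sbD D j := by
  simp_rw [sbD]
  rw [double_count]
  obtain ⟨k, hk⟩ := hb
  have : 2 ≤ pD D k := by simpa [NbD] using hk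
  calc 0 < pD D k := by omega
    _ ≤ ∑ k ∈ NbD D, pD D k := Finset.single_le_sum (fun _ _ => Nat.zero_le _) hk

/-- The (cost-game) Gately value of the successor representation coincides with the
(benefit-game) Gately value of the strong successor representation. -/
theorem gately_s_eq_gately_sigma (D : V → Finset V) (hD : ∀ i, i ∉ D i)
    (hb : (NbD D).Nonempty) (i : V) :
    (sD D {i} : ℝ) -
      (((sD D {i} : ℝ) - ((sD D Finset.univ : ℝ) - (sD D (Finset.univ \ {i}) : ℝ))) /
        (∑ j : V, ((sD D {j} : ℝ) - ((sD D Finset.univ : ℝ) - (sD D (Finset.univ \ {j}) : ℝ))))) *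
      ((∑ j : V, (sD D {j} : ℝ)) - (sD D Finset.univ : ℝ))
    =
    (sigmaD D {i} : ℝ) +
      ((((sigmaD D Finset.univ : ℝ) - (sigmaD D (Finset.univ \ {i}) : ℝ)) - (sigmaD D {i} : ℝ)) /
        (∑ j : V, (((sigmaD D Finset.univ : ℝ) - (sigmaD D (Finset.univ \ {j}) : ℝ)) - (sigmaD D {j} : ℝ)))) *
      ((sigmaD D Finset.univ : ℝ) - ∑ j : V, (sigmaD D {j} : ℝ)) := by
  have hND := card_ND D
  have hSb0 : 0 < ∑ j : V, sbD D j := sum_sbD_pos D hb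
  set n : ℝ := ((NaD D).card : ℝ) with hn
  set m : ℝ := ((NbD D).card : ℝ) with hm
  have hB : (sD D Finset.univ : ℝ) = n + m := by
    rw [sD_univ, hND]; push_cast; ring
  have hE : (sigmaD D Finset.univ : ℝ) = n + m := by
    rw [sigmaD_univ, hND]; push_cast; ring
  have hA : ∀ j, (sD D {j} : ℝ) = saD D j + sbD D j := by
    intro j; rw [sD_singleton]; push_cast; ring
  have hC : ∀ j, (sD D (Finset.univ \ {j}) : ℝ) = (n + m) - saD D j := by
    intro j
    have h := sD_compl D j
    rw [hND] at h
    have h2 := congrArg (Nat.cast : ℕ → ℝ) h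
    push_cast at h2
    rw [hn, hm]
    linarith
  have hDj : ∀ j, (sigmaD D {j} : ℝ) = saD D j := by
    intro j; rw [sigmaD_singleton]
  have hF : ∀ j, (sigmaD D (Finset.univ \ {j}) : ℝ) = (n + m) - saD D j - sbD D j := by
    intro j
    have h := sigmaD_compl D j
    rw [hND, card_Di] at h
    have h2 := congrArg (Nat.cast : ℕ → ℝ) h
    push_cast at h2
    rw [hn, hm]
    linarith
  set Sb : ℝ := ∑ j : V, (sbD D j : ℝ) with hSb
  have hSbpos : 0 < Sb := by
    rw [hSb, ← Nat.cast_sum]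
    exact_mod_cast hSb0
  have hSbne : Sb ≠ 0 := ne_of_gt hSbpos
  have hSa : ∑ j : V, (saD D j : ℝ) = n := by
    rw [← Nat.cast_sum, sum_saD]
  have hS1 : ∑ j : V, ((sD D {j} : ℝ) - ((sD D Finset.univ : ℝ) - (sD D (Finset.univ \ {j}) : ℝ))) = Sb := by
    rw [hSb]
    apply Finset.sum_congr rfl
    intro j _
    rw [hA, hB, hC]; ring
  have hS2 : ∑ j : V, (sD D {j} : ℝ) = n + Sb := by
    simp_rw [hA]
    rw [Finset.sum_add_distrib, hSa]
  have hS3 : ∑ j : V, (((sigmaD D Finset.univ : ℝ) - (sigmaD D (Finset.univ \ {j}) : ℝ)) - (sigmaD D {j} : ℝ)) = Sb := by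
    rw [hSb]
    apply Finset.sum_congr rfl
    intro j _
    rw [hE, hF, hDj]; ring
  have hS4 : ∑ j : V, (sigmaD D {j} : ℝ) = n := by
    simp_rw [hDj]; exact hSa
  rw [hS1, hS2, hS3, hS4, hA, hB, hC, hDj, hE, hF]
  field_simp
  ring
end

section
/- If D is a weakly regular hierarchical network, then the Gately measure coincides with the β-measure: s^a_D(i) + (n^b_D / Σ_{j∈N^b_D} p_D(j))·s^b_D(i) = Σ_{j∈D(i)} 1/p_D(j) for every node i. -/
open Finset

variable {V : Type*} [Fintype V] [DecidableEq V]

/-- For weakly regular networks, the Gately measure coincides with the β-measure. -/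
theorem gately_eq_beta_of_weakly_regular (D : V → Finset V) (hD : ∀ i, i ∉ D i)
    (hb : (NbD D).Nonempty)
    (p : ℕ) (hp : 2 ≤ p) (hreg : ∀ j ∈ NbD D, pD D j = p) (i : V) :
    (saD D i : ℝ) + (((NbD D).card : ℝ) / (∑ j ∈ NbD D, (pD D j : ℝ))) * (sbD D i : ℝ)
      = ∑ j ∈ D i, (1 : ℝ) / (pD D j : ℝ) := by
  have hsum : (∑ j ∈ NbD D, (pD D j : ℝ)) = ((NbD D).card : ℝ) * p := by
    rw [Finset.sum_congr rfl (fun j hj => by rw [hreg j hj])]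
    simp [mul_comm]
  have hcard : ((NbD D).card : ℝ) ≠ 0 := by
    simpa [Finset.card_eq_zero, Finset.nonempty_iff_ne_empty.mp hb] using
      (Nat.cast_ne_zero (R := ℝ)).mpr (Finset.card_ne_zero_of_mem hb.choose_spec)
  have hpne : (p : ℝ) ≠ 0 := by positivity
  have hratio : ((NbD D).card : ℝ) / (∑ j ∈ NbD D, (pD D j : ℝ)) = 1 / p := by
    rw [hsum]; field_simp
  rw [hratio]
  have hsubset : D i = (D i ∩ NaD D) ∪ (D i ∩ NbD D) := by
    ext j
    simp only [Finset.mem_union, Finset.mem_inter, NaD, NbD, Finset.mem_filter,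
      Finset.mem_univ, true_and]
    constructor
    · intro hj
      have h1 : 1 ≤ pD D j := by
        apply Finset.card_pos.mpr
        exact ⟨i, by simp [predSet, hj]⟩
      rcases eq_or_lt_of_le h1 with h | h
      · exact Or.inl ⟨hj, h.symm⟩
      · exact Or.inr ⟨hj, h⟩
    · rintro (⟨h, _⟩ | ⟨h, _⟩) <;> exact h
  have hdisj : Disjoint (D i ∩ NaD D) (D i ∩ NbD D) := by
    rw [Finset.disjoint_left]
    rintro j hj hj'
    simp only [Finset.mem_inter, NaD, NbD, Finset.mem_filter, Finset.mem_univ, true_and] at hj hj'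
    omega
  rw [show (∑ j ∈ D i, (1 : ℝ) / (pD D j : ℝ)) =
      ∑ j ∈ (D i ∩ NaD D) ∪ (D i ∩ NbD D), (1 : ℝ) / (pD D j : ℝ) from by rw [← hsubset],
    Finset.sum_union hdisj]
  have h1 : ∑ j ∈ D i ∩ NaD D, (1 : ℝ) / (pD D j : ℝ) = (saD D i : ℝ) := by
    have heq : ∀ j ∈ D i ∩ NaD D, (1 : ℝ) / (pD D j : ℝ) = 1 := by
      intro j hj
      have : pD D j = 1 := by
        have := Finset.mem_inter.mp hj
        simpa [NaD] using this.2
      simp [this]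
    rw [Finset.sum_congr rfl heq]
    simp [saD]
  have h2 : ∑ j ∈ D i ∩ NbD D, (1 : ℝ) / (pD D j : ℝ) = (sbD D i : ℝ) * (1 / p) := by
    have heq : ∀ j ∈ D i ∩ NbD D, (1 : ℝ) / (pD D j : ℝ) = 1 / p := by
      intro j hj
      rw [hreg j (Finset.mem_inter.mp hj).2]
    rw [Finset.sum_congr rfl heq]
    simp [sbD, mul_comm]
  rw [h1, h2]; ring
end
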